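/- Let (M_k) be any family of ℂ-linear maps on d^n × d^n complex matrices indexed by k ∈ (ℤ/dℤ)^n and let M̂_k be its randomized compilation. Then for all c, c' ∈ (ℤ/dℤ)^n and every d^n × d^n complex matrix ρ, Σ_{k ∈ (ℤ/dℤ)^n} χ_k(c − c')* · M̂_k(ρ) = d^{-n} Σ_{t ∈ (ℤ/dℤ)^n} ν̃_{t+c, t+c'}(M) · Tr((Z^{t+c})† ρ) · Z^{t+c'}. -/

import Mathlib

open scoped BigOperators
open Matrix

/-- Index set `(ℤ/dℤ)^n`. -/
abbrev QIdx (d n : ℕ) := Fin n → ZMod d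

/-- `d^n × d^n` complex matrices, indexed by `(ℤ/dℤ)^n`. -/
abbrev QMat (d n : ℕ) := Matrix (QIdx d n) (QIdx d n) ℂ

/-- The character `χ_z(j) = exp(2πi (z·j) / d)`. -/
noncomputable def chi (d n : ℕ) (z j : QIdx d n) : ℂ :=
  Complex.exp (2 * Real.pi * Complex.I * ((∑ i, (z i).val * (j i).val : ℕ) : ℂ) / d)

/-- The Weyl operator `X^x`, acting by `X^x |j⟩ = |j + x⟩`. -/
noncomputable def WX (d n : ℕ) (x : QIdx d n) : QMat d n :=
  Matrix.of fun a b => if a = b + x then (1 : ℂ) else 0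

/-- The Weyl operator `Z^z`, acting by `Z^z |j⟩ = χ_z(j) |j⟩`. -/
noncomputable def WZ (d n : ℕ) (z : QIdx d n) : QMat d n :=
  Matrix.diagonal fun j => chi d n z j


set_option linter.unusedSectionVars false
set_option linter.unusedVariables false
set_option maxHeartbeats 1000000

/-- exp(2πi A / d) for natural A -/
noncomputable def eN (d A : ℕ) : ℂ :=
  Complex.exp (2 * Real.pi * Complex.I * (A : ℂ) / d)

lemma eN_add (d A B : ℕ) : eN d (A + B) = eN d A * eN d B := by
  rw [eN, eN, eN, ← Complex.exp_add]
  push_cast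
  ring_nf

lemma eN_d_mul (d q : ℕ) [NeZero d] : eN d (d * q) = 1 := by
  have hd : (d : ℂ) ≠ 0 := Nat.cast_ne_zero.mpr (NeZero.ne d)
  rw [eN]
  have : 2 * (Real.pi : ℂ) * Complex.I * ((d * q : ℕ) : ℂ) / d = (q : ℤ) * (2 * Real.pi * Complex.I) := by
    push_cast
    field_simp
  rw [this, Complex.exp_int_mul_two_pi_mul_I]

lemma eN_mod (d A : ℕ) [NeZero d] : eN d A = eN d (A % d) := by
  conv_lhs => rw [← Nat.mod_add_div A d]
  rw [eN_add, eN_d_mul, mul_one]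

lemma eN_congr (d A B : ℕ) [NeZero d] (h : A % d = B % d) : eN d A = eN d B := by
  rw [eN_mod, h, ← eN_mod]

/-- character on ZMod d -/
noncomputable def ech (d : ℕ) (m : ZMod d) : ℂ := eN d m.val

lemma ech_natCast (d A : ℕ) [NeZero d] : ech d (A : ZMod d) = eN d A := by
  rw [ech, ZMod.val_natCast, ← eN_mod]

lemma ech_add (d : ℕ) [NeZero d] (a b : ZMod d) : ech d (a + b) = ech d a * ech d b := by
  have : a + b = ((a.val + b.val : ℕ) : ZMod d) := by push_cast [ZMod.natCast_val, ZMod.cast_id]; ring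
  rw [this, ech_natCast, eN_add, ech, ech]

lemma ech_zero (d : ℕ) : ech d 0 = 1 := by
  simp [ech, eN, ZMod.val_zero]

section
variable (d : ℕ) [NeZero d]
lemma ech_ne_zero (m : ZMod d) : ech d m ≠ 0 := Complex.exp_ne_zero _

lemma star_eN (A : ℕ) : (starRingEnd ℂ) (eN d A) = (eN d A)⁻¹ := by
  rw [eN, ← Complex.exp_conj, ← Complex.exp_neg]
  congr 1
  simp [map_div₀, Complex.conj_I, map_ofNat]
  ring

lemma ech_neg (a : ZMod d) : ech d (-a) = (ech d a)⁻¹ := by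
  refine eq_inv_of_mul_eq_one_left ?_
  rw [← ech_add, neg_add_cancel, ech_zero]

lemma star_ech (a : ZMod d) : (starRingEnd ℂ) (ech d a) = ech d (-a) := by
  rw [ech_neg, ech, star_eN]

lemma eN_pow (A B : ℕ) : eN d (A * B) = (eN d B) ^ A := by
  rw [eN, eN, ← Complex.exp_nat_mul]
  congr 1; push_cast; ring


lemma sum_ech_single (w : ZMod d) :
    ∑ v : ZMod d, ech d (v * w) = if w = 0 then (d : ℂ) else 0 := by
  split_ifs with h
  · subst h; simp [ech_zero, ZMod.card]
  · -- w ≠ 0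
    have key : ∀ v : ZMod d, ech d (v * w) = (eN d w.val) ^ v.val := by
      intro v
      have : v * w = ((v.val * w.val : ℕ) : ZMod d) := by
        push_cast [ZMod.natCast_val, ZMod.cast_id]
        ring
      rw [this, ech_natCast, eN_pow]
    simp_rw [key]
    -- sum over ZMod d of z^v.val = sum over range d
    have hbij : ∑ v : ZMod d, (eN d w.val) ^ v.val = ∑ m ∈ Finset.range d, (eN d w.val) ^ m := by
      refine Finset.sum_nbij' (fun v => v.val) (fun m => (m : ZMod d)) ?_ ?_ ?_ ?_ ?_
      · intro v _; exact Finset.mem_range.mpr (ZMod.val_lt v)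
      · intro m _; exact Finset.mem_univ _
      · intro v _; simp [ZMod.natCast_val, ZMod.cast_id]
      · intro m hm; exact ZMod.val_natCast_of_lt (Finset.mem_range.mp hm)
      · intro v _; rfl
    rw [hbij]
    have hz1 : eN d w.val ≠ 1 := by
      intro he
      rw [eN, Complex.exp_eq_one_iff] at he
      obtain ⟨k, hk⟩ := he
      have hd : (d : ℂ) ≠ 0 := Nat.cast_ne_zero.mpr (NeZero.ne d)
      have h2 : (2 : ℂ) * Real.pi * Complex.I ≠ 0 := by
        simp [Real.pi_ne_zero, Complex.I_ne_zero, Complex.ofReal_ne_zero]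
      have h3 : ((2:ℂ)*Real.pi*Complex.I) * ((w.val:ℂ)/d) = ((2:ℂ)*Real.pi*Complex.I) * k := by
        linear_combination hk
      have h4 := mul_left_cancel₀ h2 h3
      rw [div_eq_iff hd] at h4
      have : (w.val : ℂ) = k * d := h4
      have hint : (w.val : ℤ) = k * d := by exact_mod_cast this
      have hdvd : (d : ℤ) ∣ (w.val : ℤ) := ⟨k, by linarith [hint]⟩
      have : d ∣ w.val := Int.natCast_dvd_natCast.mp hdvd
      have := Nat.eq_zero_of_dvd_of_lt this (ZMod.val_lt w)
      exact h (by rwa [ZMod.val_eq_zero] at this)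
    rw [geom_sum_eq hz1]
    have : eN d w.val ^ d = 1 := by
      rw [← eN_pow, eN_d_mul]
    rw [this, sub_self, zero_div]
end

section
variable (d n : ℕ) [NeZero d]
lemma chi_eq_ech (z j : QIdx d n) : chi d n z j = ech d (∑ i, z i * j i) := by
  have h : (∑ i, z i * j i) = ((∑ i, (z i).val * (j i).val : ℕ) : ZMod d) := by
    push_cast [ZMod.natCast_val, ZMod.cast_id]
    rfl
  rw [h, ech_natCast]
  rfl

lemma chi_comm (z j : QIdx d n) : chi d n z j = chi d n j z := by
  simp [chi, Nat.mul_comm]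

lemma chi_mul_right (z a b : QIdx d n) :
    chi d n z (a + b) = chi d n z a * chi d n z b := by
  rw [chi_eq_ech, chi_eq_ech, chi_eq_ech, ← ech_add]
  congr 1
  rw [← Finset.sum_add_distrib]
  exact Finset.sum_congr rfl fun i _ => by simp [mul_add]

lemma chi_mul_left (z w j : QIdx d n) :
    chi d n (z + w) j = chi d n z j * chi d n w j := by
  rw [chi_comm, chi_mul_right, chi_comm, chi_comm d n j w]

lemma chi_zero_right (z : QIdx d n) : chi d n z 0 = 1 := by
  rw [chi_eq_ech]
  simp [ech_zero]

lemma star_chi (z j : QIdx d n) : (starRingEnd ℂ) (chi d n z j) = chi d n z (-j) := by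
  rw [chi_eq_ech, chi_eq_ech, star_ech]
  congr 1
  simp

lemma ech_sum {ι : Type*} (t : Finset ι) (f : ι → ZMod d) :
    ech d (∑ i ∈ t, f i) = ∏ i ∈ t, ech d (f i) := by
  classical
  induction t using Finset.induction_on with
  | empty => simp [ech_zero]
  | insert _ _ h ih => rw [Finset.sum_insert h, Finset.prod_insert h, ech_add, ih]

lemma sum_chi (s : QIdx d n) :
    ∑ x : QIdx d n, chi d n x s = if s = 0 then (d : ℂ) ^ n else 0 := by
  have h1 : ∀ x : QIdx d n, chi d n x s = ∏ i, ech d (x i * s i) := fun x => by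
    rw [chi_eq_ech, ech_sum]
  simp_rw [h1]
  rw [← Fintype.prod_sum (f := fun i (v : ZMod d) => ech d (v * s i))]
  simp_rw [sum_ech_single]
  by_cases hs : s = 0
  · subst hs; simp
  · rw [if_neg hs]
    obtain ⟨i, hi⟩ : ∃ i, s i ≠ 0 := by
      by_contra hc
      push_neg at hc
      exact hs (funext hc)
    exact Finset.prod_eq_zero (Finset.mem_univ i) (by rw [if_neg hi])

noncomputable def S (s : QIdx d n) (A : QMat d n) : ℂ := ((WZ d n s)ᴴ * A).trace

lemma WZ_conjTranspose (s : QIdx d n) :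
    (WZ d n s)ᴴ = Matrix.diagonal fun j => (starRingEnd ℂ) (chi d n s j) := by
  rw [WZ, Matrix.diagonal_conjTranspose]
  rfl

lemma S_eq (s : QIdx d n) (A : QMat d n) :
    S d n s A = ∑ j, (starRingEnd ℂ) (chi d n s j) * A j j := by
  rw [S, WZ_conjTranspose]
  simp [Matrix.trace, Matrix.diag, Matrix.diagonal_mul]

lemma WZ_mul_mul (b : QIdx d n) (A : QMat d n) (i j : QIdx d n) :
    (WZ d n b * A * (WZ d n b)ᴴ) i j = chi d n b i * A i j * (starRingEnd ℂ) (chi d n b j) := by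
  rw [WZ_conjTranspose, Matrix.mul_diagonal, WZ, Matrix.diagonal_mul]

/-- Z-twirl, version 1 -/
lemma Ztwirl (A : QMat d n) :
    ∑ b : QIdx d n, WZ d n b * A * (WZ d n b)ᴴ =
      ∑ t : QIdx d n, S d n t A • WZ d n t := by
  ext i j
  rw [Matrix.sum_apply, Matrix.sum_apply]
  have lhs : ∀ b : QIdx d n, (WZ d n b * A * (WZ d n b)ᴴ) i j
      = chi d n b (i + -j) * A i j := by
    intro b
    rw [WZ_mul_mul, star_chi, chi_mul_right]
    ring
  simp_rw [lhs, ← Finset.sum_mul, sum_chi]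
  have rhs : ∀ t : QIdx d n, (S d n t A • WZ d n t) i j
      = ∑ l, (starRingEnd ℂ) (chi d n t l) * A l l * (WZ d n t) i j := by
    intro t
    rw [Matrix.smul_apply, S_eq, smul_eq_mul, Finset.sum_mul]
  simp_rw [rhs]
  rw [Finset.sum_comm]
  by_cases hij : i = j
  · subst hij
    rw [if_pos (by simp)]
    have : ∀ l : QIdx d n, ∑ t : QIdx d n,
        (starRingEnd ℂ) (chi d n t l) * A l l * (WZ d n t) i i
        = A l l * ∑ t : QIdx d n, chi d n t (i + -l) := by
      intro l
      rw [Finset.mul_sum]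
      refine Finset.sum_congr rfl fun t _ => ?_
      rw [WZ, Matrix.diagonal_apply_eq, star_chi, chi_mul_right]
      ring
    simp_rw [this, sum_chi]
    have hc : ∀ l : QIdx d n, (if i + -l = 0 then (d:ℂ)^n else 0)
        = if l = i then (d:ℂ)^n else 0 := by
      intro l
      simp [add_neg_eq_zero, eq_comm]
    simp_rw [hc, mul_ite, mul_zero, Finset.sum_ite_eq', Finset.mem_univ, if_pos]
    ring
  · rw [if_neg (fun h => hij (by rwa [add_neg_eq_zero] at h)), zero_mul]
    have : ∀ t l : QIdx d n, (starRingEnd ℂ) (chi d n t l) * A l l * (WZ d n t) i j = 0 := by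
      intro t l
      rw [WZ, Matrix.diagonal_apply_ne _ hij, mul_zero]
    simp [this]

lemma WX_conjTranspose (x : QIdx d n) : (WX d n x)ᴴ = WX d n (-x) := by
  ext a b
  simp only [Matrix.conjTranspose_apply, WX, Matrix.of_apply]
  simp only [show (b = a + x) ↔ (a = b + -x) from by constructor <;> intro h <;> simp [h]]
  simp [apply_ite (starRingEnd ℂ)]

lemma WX_mul_WZ_mul (x t : QIdx d n) :
    WX d n x * WZ d n t * (WX d n x)ᴴ = (starRingEnd ℂ) (chi d n t x) • WZ d n t := by
  rw [WX_conjTranspose]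
  ext i j
  have h1 : ∀ b, (WX d n x * WZ d n t) i b = if i = b + x then chi d n t b else 0 := by
    intro b
    rw [WZ, Matrix.mul_diagonal, WX]
    simp [ite_mul]
  rw [Matrix.mul_apply]
  simp_rw [h1, WX, Matrix.of_apply, mul_ite, mul_one, mul_zero]
  rw [Finset.sum_ite_eq' Finset.univ (j + -x) (fun b => if i = b + x then chi d n t b else 0)]
  simp only [Finset.mem_univ, if_pos, neg_add_cancel_right]
  rw [Matrix.smul_apply, WZ, Matrix.diagonal_apply]
  by_cases hij : i = j
  · subst hij
    rw [if_pos rfl, if_pos rfl, star_chi, smul_eq_mul, ← chi_mul_right]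
    congr 1
    abel
  · rw [if_neg hij, if_neg hij, smul_zero]

lemma diag_WX_mul_mul (y : QIdx d n) (ρ : QMat d n) (j : QIdx d n) :
    (WX d n y * ρ * (WX d n y)ᴴ) j j = ρ (j + -y) (j + -y) := by
  rw [WX_conjTranspose]
  have h2 : (WX d n y * ρ * WX d n (-y)) j j
      = ∑ b, (WX d n y * ρ) j b * (if b = j + -y then (1:ℂ) else 0) := by
    rw [Matrix.mul_apply]; rfl
  rw [h2]
  simp_rw [mul_ite, mul_one, mul_zero]
  rw [Finset.sum_ite_eq' Finset.univ (j + -y) (fun b => (WX d n y * ρ) j b),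
    if_pos (Finset.mem_univ _), Matrix.mul_apply]
  have h3 : ∀ a, ((if j = a + y then (1:ℂ) else 0) * ρ a (j + -y))
      = if a = j + -y then ρ a (j + -y) else 0 := by
    intro a
    simp only [show (j = a + y) ↔ (a = j + -y) from by constructor <;> intro h <;> simp [h]]
    rw [ite_mul, zero_mul, one_mul]
  simp only [WX, Matrix.of_apply]
  simp_rw [h3]
  rw [Finset.sum_ite_eq' Finset.univ (j + -y) (fun a => ρ a (j + -y)), if_pos (Finset.mem_univ _)]

lemma S_WX_conj (s y : QIdx d n) (ρ : QMat d n) :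
    S d n s (WX d n y * ρ * (WX d n y)ᴴ) = (starRingEnd ℂ) (chi d n s y) * S d n s ρ := by
  rw [S_eq, S_eq]
  simp_rw [diag_WX_mul_mul]
  have := (Equiv.sum_comp (Equiv.addRight y)
    (fun j => (starRingEnd ℂ) (chi d n s j) * ρ (j + -y) (j + -y))).symm
  simp only [Equiv.coe_addRight] at this
  rw [this]
  simp only [add_neg_cancel_right]
  rw [Finset.mul_sum]
  refine Finset.sum_congr rfl fun j _ => ?_
  rw [chi_mul_right, _root_.map_mul]
  ring

lemma H1 (x : QIdx d n) (B : QMat d n) :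
    ∑ a : QIdx d n, WX d n x * WZ d n a * B * (WZ d n a)ᴴ * (WX d n x)ᴴ
      = ∑ t : QIdx d n, (S d n t B * (starRingEnd ℂ) (chi d n t x)) • WZ d n t := by
  have assoc : ∀ a : QIdx d n, WX d n x * WZ d n a * B * (WZ d n a)ᴴ * (WX d n x)ᴴ
      = WX d n x * (WZ d n a * B * (WZ d n a)ᴴ) * (WX d n x)ᴴ := by
    intro a; simp only [Matrix.mul_assoc]
  simp_rw [assoc]
  rw [← Finset.sum_mul, ← Finset.mul_sum, Ztwirl, Finset.mul_sum, Finset.sum_mul]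
  refine Finset.sum_congr rfl fun t _ => ?_
  rw [Matrix.mul_smul, Matrix.smul_mul, WX_mul_WZ_mul, smul_smul, mul_comm]

lemma H2 (N : QMat d n →ₗ[ℂ] QMat d n) (x : QIdx d n) (ρ : QMat d n) :
    ∑ b : QIdx d n, N (WZ d n b * (WX d n (-x) * ρ * (WX d n (-x))ᴴ) * (WZ d n b)ᴴ)
      = ∑ s : QIdx d n, (chi d n s x * S d n s ρ) • N (WZ d n s) := by
  rw [← map_sum, Ztwirl, map_sum]
  refine Finset.sum_congr rfl fun s _ => ?_
  rw [_root_.map_smul, S_WX_conj, star_chi, neg_neg]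

lemma step1 (N : QMat d n →ₗ[ℂ] QMat d n) (x : QIdx d n) (ρ : QMat d n) :
    (∑ a : QIdx d n, ∑ b : QIdx d n,
      WX d n x * WZ d n a * N (WZ d n b * (WX d n (-x) * ρ * (WX d n (-x))ᴴ) * (WZ d n b)ᴴ)
        * (WZ d n a)ᴴ * (WX d n x)ᴴ)
      = ∑ s : QIdx d n, ∑ t : QIdx d n,
          ((chi d n s x * S d n s ρ) * (S d n t (N (WZ d n s)) * (starRingEnd ℂ) (chi d n t x)))
            • WZ d n t := by
  have hb : ∀ a : QIdx d n, (∑ b : QIdx d n,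
      WX d n x * WZ d n a * N (WZ d n b * (WX d n (-x) * ρ * (WX d n (-x))ᴴ) * (WZ d n b)ᴴ)
        * (WZ d n a)ᴴ * (WX d n x)ᴴ)
      = ∑ s : QIdx d n, (chi d n s x * S d n s ρ) •
          (WX d n x * WZ d n a * N (WZ d n s) * (WZ d n a)ᴴ * (WX d n x)ᴴ) := by
    intro a
    rw [← Finset.sum_mul, ← Finset.sum_mul, ← Finset.mul_sum, H2, Finset.mul_sum,
      Finset.sum_mul, Finset.sum_mul]
    refine Finset.sum_congr rfl fun s _ => ?_
    rw [Matrix.mul_smul, Matrix.smul_mul, Matrix.smul_mul]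
  simp_rw [hb]
  rw [Finset.sum_comm]
  refine Finset.sum_congr rfl fun s _ => ?_
  rw [← Finset.smul_sum, H1, Finset.smul_sum]
  refine Finset.sum_congr rfl fun t _ => ?_
  rw [smul_smul]

lemma H3 (c c' s t : QIdx d n) :
    ∑ x : QIdx d n,
      (starRingEnd ℂ) (chi d n x (c - c')) * (chi d n s x * (starRingEnd ℂ) (chi d n t x))
      = if s = t + (c - c') then (d : ℂ) ^ n else 0 := by
  have hterm : ∀ x : QIdx d n,
      (starRingEnd ℂ) (chi d n x (c - c')) * (chi d n s x * (starRingEnd ℂ) (chi d n t x))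
      = chi d n x (-(c - c') + s + -t) := by
    intro x
    rw [star_chi, chi_comm d n s x, chi_comm d n t x, star_chi, chi_mul_right, chi_mul_right]
    ring
  simp_rw [hterm]
  rw [sum_chi]
  have hiff : (-(c - c') + s + -t = 0) ↔ (s = t + (c - c')) :=
    ⟨fun h => by linear_combination h, fun h => by linear_combination h⟩
  simp only [hiff]
end

/-- The generalized Pauli fidelities
`ν̃_{s,t}(M) = d^{-n} Σ_k χ_k(s−t)^* Tr((Z^t)† M_k(Z^s))`. -/
noncomputable def gpf (d n : ℕ) [NeZero d]
    (M : QIdx d n → (QMat d n →ₗ[ℂ] QMat d n)) (s t : QIdx d n) : ℂ :=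
  (1 / (d : ℂ) ^ n) *
    ∑ k : QIdx d n, (starRingEnd ℂ) (chi d n k (s - t)) * ((WZ d n t)ᴴ * M k (WZ d n s)).trace

/-- The randomized compilation
`M̂_k = d^{-3n} Σ_{a,b,x} 𝒳^x ∘ 𝒵^a ∘ M_{k−x} ∘ 𝒵^b ∘ 𝒳^{−x}`. -/
noncomputable def rc (d n : ℕ) [NeZero d]
    (M : QIdx d n → (QMat d n →ₗ[ℂ] QMat d n)) (k : QIdx d n) (ρ : QMat d n) : QMat d n :=
  (1 / (d : ℂ) ^ (3 * n)) •
    ∑ a : QIdx d n, ∑ b : QIdx d n, ∑ x : QIdx d n,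
      WX d n x * WZ d n a *
        (M (k - x) (WZ d n b * (WX d n (-x) * ρ * (WX d n (-x))ᴴ) * (WZ d n b)ᴴ)) *
        (WZ d n a)ᴴ * (WX d n x)ᴴ

/-- For all `c, c'` and every `ρ`:
`Σ_k χ_k(c − c')^* M̂_k(ρ) = d^{-n} Σ_t ν̃_{t+c, t+c'}(M) Tr((Z^{t+c})† ρ) Z^{t+c'}`. -/
theorem character_weighted_sum_of_rc
    (d n : ℕ) [NeZero d] (hd : 2 ≤ d) (hn : 1 ≤ n)
    (M : QIdx d n → (QMat d n →ₗ[ℂ] QMat d n))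
    (c c' : QIdx d n) (ρ : QMat d n) :
    ∑ k : QIdx d n, (starRingEnd ℂ) (chi d n k (c - c')) • rc d n M k ρ =
      (1 / (d : ℂ) ^ n) •
        ∑ t : QIdx d n,
          (gpf d n M (t + c) (t + c') * ((WZ d n (t + c))ᴴ * ρ).trace) • WZ d n (t + c') := by
  have hx0 : (d : ℂ) ^ n ≠ 0 := pow_ne_zero _ (Nat.cast_ne_zero.mpr (NeZero.ne d))
  set cst : ℂ := 1 / (d : ℂ) ^ (3 * n) with hcst
  -- Step 1: closed form for rc
  have hT : ∀ k : QIdx d n, rc d n M k ρ = cst • ∑ x : QIdx d n, ∑ s : QIdx d n, ∑ t : QIdx d n,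
      ((chi d n s x * S d n s ρ) *
        (S d n t (M (k - x) (WZ d n s)) * (starRingEnd ℂ) (chi d n t x))) • WZ d n t := by
    intro k
    rw [rc]
    congr 1
    have e1 : ∀ a : QIdx d n, (∑ b : QIdx d n, ∑ x : QIdx d n,
        WX d n x * WZ d n a *
          (M (k - x) (WZ d n b * (WX d n (-x) * ρ * (WX d n (-x))ᴴ) * (WZ d n b)ᴴ)) *
          (WZ d n a)ᴴ * (WX d n x)ᴴ)
        = ∑ x : QIdx d n, ∑ b : QIdx d n,
        WX d n x * WZ d n a *
          (M (k - x) (WZ d n b * (WX d n (-x) * ρ * (WX d n (-x))ᴴ) * (WZ d n b)ᴴ)) *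
          (WZ d n a)ᴴ * (WX d n x)ᴴ := fun a => Finset.sum_comm
    simp_rw [e1]
    rw [Finset.sum_comm]
    exact Finset.sum_congr rfl fun x _ => step1 d n (M (k - x)) x ρ
  -- Step 2: expand LHS into quadruple sum
  calc
    ∑ k : QIdx d n, (starRingEnd ℂ) (chi d n k (c - c')) • rc d n M k ρ
      = ∑ k : QIdx d n, ∑ x : QIdx d n, ∑ s : QIdx d n, ∑ t : QIdx d n,
          ((starRingEnd ℂ) (chi d n k (c - c')) * cst *
            ((chi d n s x * S d n s ρ) *
              (S d n t (M (k - x) (WZ d n s)) * (starRingEnd ℂ) (chi d n t x)))) • WZ d n t := by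
        refine Finset.sum_congr rfl fun k _ => ?_
        rw [hT k, smul_smul, Finset.smul_sum]
        refine Finset.sum_congr rfl fun x _ => ?_
        rw [Finset.smul_sum]
        refine Finset.sum_congr rfl fun s _ => ?_
        rw [Finset.smul_sum]
        refine Finset.sum_congr rfl fun t _ => ?_
        rw [smul_smul]
    _ = ∑ x : QIdx d n, ∑ m : QIdx d n, ∑ s : QIdx d n, ∑ t : QIdx d n,
          (cst * (((starRingEnd ℂ) (chi d n m (c - c')) * S d n s ρ *
              S d n t (M m (WZ d n s))) *
            ((starRingEnd ℂ) (chi d n x (c - c')) *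
              (chi d n s x * (starRingEnd ℂ) (chi d n t x))))) • WZ d n t := by
        rw [Finset.sum_comm]
        refine Finset.sum_congr rfl fun x _ => ?_
        refine (Fintype.sum_equiv (Equiv.addRight x) _ _ ?_).symm
        intro m
        simp only [Equiv.coe_addRight, add_sub_cancel_right]
        refine Finset.sum_congr rfl fun s _ => ?_
        refine Finset.sum_congr rfl fun t _ => ?_
        congr 1
        rw [chi_mul_left, _root_.map_mul]
        ring
    _ = ∑ m : QIdx d n, ∑ s : QIdx d n, ∑ t : QIdx d n, ∑ x : QIdx d n,
          (cst * (((starRingEnd ℂ) (chi d n m (c - c')) * S d n s ρ *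
              S d n t (M m (WZ d n s))) *
            ((starRingEnd ℂ) (chi d n x (c - c')) *
              (chi d n s x * (starRingEnd ℂ) (chi d n t x))))) • WZ d n t := by
        rw [Finset.sum_comm]
        refine Finset.sum_congr rfl fun m _ => ?_
        rw [Finset.sum_comm]
        refine Finset.sum_congr rfl fun s _ => ?_
        rw [Finset.sum_comm]
    _ = ∑ m : QIdx d n, ∑ s : QIdx d n, ∑ t : QIdx d n,
          (cst * (((starRingEnd ℂ) (chi d n m (c - c')) * S d n s ρ *
              S d n t (M m (WZ d n s))) *
            (if s = t + (c - c') then (d : ℂ) ^ n else 0))) • WZ d n t := by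
        refine Finset.sum_congr rfl fun m _ => ?_
        refine Finset.sum_congr rfl fun s _ => ?_
        refine Finset.sum_congr rfl fun t _ => ?_
        rw [← Finset.sum_smul]
        congr 1
        rw [← Finset.mul_sum, ← Finset.mul_sum, H3]
    _ = ∑ m : QIdx d n, ∑ t : QIdx d n,
          (cst * (((starRingEnd ℂ) (chi d n m (c - c')) * S d n (t + (c - c')) ρ *
              S d n t (M m (WZ d n (t + (c - c'))))) * (d : ℂ) ^ n)) • WZ d n t := by
        refine Finset.sum_congr rfl fun m _ => ?_
        rw [Finset.sum_comm]
        refine Finset.sum_congr rfl fun t _ => ?_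
        simp only [mul_ite, mul_zero, ite_smul, zero_smul]
        rw [Finset.sum_ite_eq' Finset.univ (t + (c - c'))]
        rw [if_pos (Finset.mem_univ _)]
    _ = ∑ u : QIdx d n, ∑ m : QIdx d n,
          (cst * (((starRingEnd ℂ) (chi d n m (c - c')) * S d n (u + c) ρ *
              S d n (u + c') (M m (WZ d n (u + c)))) * (d : ℂ) ^ n)) • WZ d n (u + c') := by
        rw [Finset.sum_comm]
        refine (Fintype.sum_equiv (Equiv.addRight c') _ _ ?_).symm
        intro u
        simp only [Equiv.coe_addRight]
        have harg : (u + c') + (c - c') = u + c := by ring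
        rw [harg]
    _ = (1 / (d : ℂ) ^ n) • ∑ t : QIdx d n,
          (gpf d n M (t + c) (t + c') * ((WZ d n (t + c))ᴴ * ρ).trace) • WZ d n (t + c') := by
        rw [Finset.smul_sum]
        refine Finset.sum_congr rfl fun u _ => ?_
        rw [gpf, add_sub_add_left_eq_sub]
        have hS : ∀ m : QIdx d n, ((WZ d n (u + c'))ᴴ * M m (WZ d n (u + c))).trace
            = S d n (u + c') (M m (WZ d n (u + c))) := fun m => rfl
        simp_rw [hS]
        have hρ : ((WZ d n (u + c))ᴴ * ρ).trace = S d n (u + c) ρ := rfl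
        rw [hρ, smul_smul, Finset.mul_sum, Finset.sum_mul, Finset.mul_sum, Finset.sum_smul]
        refine Finset.sum_congr rfl fun m _ => ?_
        congr 1
        have hpow : (d : ℂ) ^ (3 * n) = ((d : ℂ) ^ n) ^ 3 := by
          rw [mul_comm, pow_mul]
        rw [hcst, hpow]
        field_simp
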